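/- (Theorem 3.3(ii): L¹ bound of the basic function in the first variable, case ρ ≥ 1) Let θ ∈ ℝ with sin θ ≠ 0 and ρ ≥ 1. Let φ ∈ L¹(ℝ), let the functions x ↦ (1+|x|^{ρ−1})χ(x) and x ↦ (1+|x|^{ρ−1})ψ(x) belong to L¹(ℝ), and let 0 < C_φ = ∫_ℝ |φ̂(ω)|²/|ω| dω < ∞. Then for all v, w ∈ ℝ with v ≠ w, ∫_ℝ |D^α(u,v,w)| du ≤ C_φ^{−1} · 2^{ρ−1} · |v−w|^{−ρ} · [ ‖ψ(x)x^{ρ−1}‖₁ · ‖χ‖₁ + ‖χ(x)x^{ρ−1}‖₁ · ‖ψ‖₁ ] · ‖φ‖₁. -/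

import Mathlib

open MeasureTheory Complex

/-- The fractional wavelet family `φ^α_{a,b}(t) = e^{(-i/2)(t²-b²)cot θ} |a|^{-ρ} φ((t-b)/a)`. -/
noncomputable def fracWav (θ ρ : ℝ) (φ : ℝ → ℂ) (a b t : ℝ) : ℂ :=
  Complex.exp ((-(Complex.I / 2)) * ((t : ℂ) ^ 2 - (b : ℂ) ^ 2) *
      ((Real.cos θ / Real.sin θ : ℝ) : ℂ)) *
    ((|a| ^ (-ρ) : ℝ) : ℂ) * φ ((t - b) / a)

/-- The general novel fractional wavelet transform (GNFrWT). -/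
noncomputable def GNFrWT (θ ρ : ℝ) (φ h : ℝ → ℂ) (a b : ℝ) : ℂ :=
  ∫ t : ℝ, h t * (starRingEnd ℂ) (fracWav θ ρ φ a b t)

/-- The admissibility constant `C_φ = ∫ |φ̂(ω)|²/|ω| dω`. -/
noncomputable def admConst (φ : ℝ → ℂ) : ℝ :=
  ∫ ω : ℝ, ‖FourierTransform.fourier φ ω‖ ^ 2 / |ω|

/-- The basic function `D^α(u,v,w)` associated with the GNFrWT. -/
noncomputable def basicD (θ ρ : ℝ) (ψ χ φ : ℝ → ℂ) (u v w : ℝ) : ℂ :=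
  ((admConst φ : ℝ) : ℂ)⁻¹ *
    ∫ a in Set.Ioi (0 : ℝ), ∫ b : ℝ,
      (starRingEnd ℂ) (fracWav θ ρ ψ a b w) * (starRingEnd ℂ) (fracWav θ ρ χ a b v) *
        fracWav θ ρ φ a b u * ((|a| ^ (2 * ρ - 3) : ℝ) : ℂ)

/-- The convolution `#^α` associated with the GNFrWT. -/
noncomputable def convAlpha (θ ρ : ℝ) (ψ χ φ h g : ℝ → ℂ) (u : ℝ) : ℂ :=
  ∫ w : ℝ, ∫ v : ℝ, basicD θ ρ ψ χ φ u v w * h w * g v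

/-!
Bound `|D^α(u,v,w)|` by the same integral with every factor replaced by its modulus; the chirp
phases have modulus one. In the resulting nonnegative integral, integrate first in `u`, then
in `b` (both are affine changes of variables, each producing a factor `a`), and finally
substitute `t = (v - w)/a` in the scale integral. This leaves `|v - w|^{-ρ}` times
`∫ |t|^{ρ-1} ∫ |ψ(s)| |χ(s+t)| ds dt`, and Peetre's inequality
`|t|^{ρ-1} ≤ 2^{ρ-1} (|s|^{ρ-1} + |s+t|^{ρ-1})` splits this into the two products of norms.
-/

open ENNReal

theorem lintegral_comp_div (F : ℝ → ℝ≥0∞) {a : ℝ} (ha : a ≠ 0) :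
    ∫⁻ x, F (x / a) = ENNReal.ofReal |a| * ∫⁻ x, F x := by
  have hmap := Real.map_volume_mul_right (inv_ne_zero ha)
  rw [inv_inv] at hmap
  simp_rw [div_eq_mul_inv]
  rw [← smul_eq_mul, ← lintegral_smul_measure, ← hmap]
  exact (lintegral_map_equiv F (MeasurableEquiv.mulRight₀ a⁻¹ (inv_ne_zero ha))).symm

theorem lintegral_comp_sub_div (F : ℝ → ℝ≥0∞) (b : ℝ) {a : ℝ} (ha : a ≠ 0) :
    ∫⁻ x, F ((x - b) / a) = ENNReal.ofReal |a| * ∫⁻ x, F x := by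
  rw [lintegral_sub_right_eq_self (fun x => F (x / a)) b, lintegral_comp_div F ha]

theorem ofReal_abs_sub_rpow_le {p : ℝ} (hp : 0 ≤ p) (x y : ℝ) :
    ENNReal.ofReal (|x - y| ^ p) ≤
      2 ^ p * (ENNReal.ofReal (|x| ^ p) + ENNReal.ofReal (|y| ^ p)) := by
  simp only [← ENNReal.ofReal_rpow_of_nonneg (abs_nonneg _) hp]
  calc ENNReal.ofReal |x - y| ^ p ≤ (ENNReal.ofReal |x| + ENNReal.ofReal |y|) ^ p := by
        rw [← ENNReal.ofReal_add (abs_nonneg _) (abs_nonneg _)]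
        gcongr
        exact abs_sub _ _
    _ ≤ _ := add_rpow_le_two_rpow_mul_rpow_add_rpow _ _ hp

theorem AEMeasurable.exists_measurable_ge_ae_eq {α : Type*} [MeasurableSpace α] {μ : Measure α}
    {f : α → ℝ≥0∞} (hf : AEMeasurable f μ) : ∃ g, Measurable g ∧ f ≤ g ∧ g =ᵐ[μ] f := by
  classical
  set N := toMeasurable μ {x | f x ≠ hf.mk f x}
  have hN : μ N = 0 := by rw [measure_toMeasurable]; exact hf.ae_eq_mk
  refine ⟨N.piecewise (fun _ => ⊤) (hf.mk f),
    (measurable_const.piecewise (measurableSet_toMeasurable _ _) hf.measurable_mk), fun x => ?_, ?_⟩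
  · by_cases hx : x ∈ N
    · simp [Set.piecewise_eq_of_mem _ _ _ hx]
    · rw [Set.piecewise_eq_of_notMem _ _ _ hx]
      exact (not_not.1 fun h => hx (subset_toMeasurable _ _ h)).le
  · filter_upwards [measure_eq_zero_iff_ae_notMem.1 hN, hf.ae_eq_mk] with x hx hfx
    rw [Set.piecewise_eq_of_notMem _ _ _ hx, hfx]

theorem Complex.enorm_ofReal (r : ℝ) : ‖(r : ℂ)‖ₑ = ‖r‖ₑ := by
  rw [← ofReal_norm, ← ofReal_norm, Complex.norm_real]

theorem lintegral_eq_eLpNorm_one_of_ae_eq {α E : Type*} [MeasurableSpace α] {μ : Measure α}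
    [ENorm E] {f : α → E} {g : α → ℝ≥0∞} (h : g =ᵐ[μ] fun x => ‖f x‖ₑ) :
    ∫⁻ x, g x ∂μ = eLpNorm f 1 μ := by
  rw [eLpNorm_one_eq_lintegral_enorm]
  exact lintegral_congr_ae h

theorem integral_norm_le_toReal_lintegral_enorm {α E : Type*} [MeasurableSpace α]
    {μ : Measure α} [NormedAddCommGroup E] (f : α → E) :
    ∫ x, ‖f x‖ ∂μ ≤ (∫⁻ x, ‖f x‖ₑ ∂μ).toReal := by
  rw [← Real.norm_of_nonneg (integral_nonneg fun _ => norm_nonneg _)]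
  simpa only [norm_norm, ofReal_norm] using norm_integral_le_lintegral_norm (fun x => ‖f x‖)

theorem MemLp.of_one_add_rpow_abs_mul {μ : Measure ℝ} {q : ℝ≥0∞} {p : ℝ} {g : ℝ → ℂ}
    (hg : MemLp (fun x : ℝ => ((1 + |x| ^ p : ℝ) : ℂ) * g x) q μ) :
    MemLp g q μ ∧ MemLp (fun x : ℝ => g x * ((|x| ^ p : ℝ) : ℂ)) q μ := by
  have hpos : ∀ x : ℝ, 0 < 1 + |x| ^ p := fun x => by positivity
  have hnorm : ∀ x, ‖((1 + |x| ^ p : ℝ) : ℂ) * g x‖ = (1 + |x| ^ p) * ‖g x‖ := fun x => by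
    rw [norm_mul, Complex.norm_real, Real.norm_of_nonneg (hpos x).le]
  have hmeas : AEStronglyMeasurable g μ := by
    refine ((Measurable.aestronglyMeasurable (by fun_prop :
      Measurable fun x : ℝ => ((1 + |x| ^ p : ℝ) : ℂ)⁻¹)).mul hg.1).congr (ae_of_all _ fun x => ?_)
    exact inv_mul_cancel_left₀ (Complex.ofReal_ne_zero.2 (hpos x).ne') (g x)
  refine ⟨hg.mono hmeas (ae_of_all _ fun x => ?_),
    hg.mono (hmeas.mul (by fun_prop : Measurable _).aestronglyMeasurable)
      (ae_of_all _ fun x => ?_)⟩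
  · rw [hnorm]
    exact le_mul_of_one_le_left (norm_nonneg _) (by simp [Real.rpow_nonneg (abs_nonneg x)])
  · rw [hnorm, norm_mul, Complex.norm_real, Real.norm_of_nonneg (by positivity), mul_comm]
    gcongr
    linarith

theorem setLIntegral_Ioi_rpow_mul_comp_div_le (H : ℝ → ℝ≥0∞) (ρ : ℝ) {c : ℝ} (hc : c ≠ 0) :
    ∫⁻ a in Set.Ioi 0, ENNReal.ofReal (a ^ (-ρ - 1)) * H (c / a) ≤
      ENNReal.ofReal (|c| ^ (-ρ)) * ∫⁻ t, ENNReal.ofReal (|t| ^ (ρ - 1)) * H t := by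
  have hderiv : ∀ a ∈ Set.Ioi (0 : ℝ),
      HasDerivWithinAt (fun a => c / a) (-c / a ^ 2) (Set.Ioi 0) a := fun a ha => by
    simpa [div_eq_mul_inv, neg_div] using
      ((hasDerivAt_inv (ne_of_gt ha)).const_mul c).hasDerivWithinAt
  have hinj : Set.InjOn (fun a : ℝ => c / a) (Set.Ioi 0) := fun x hx y hy hxy => by
    simpa [div_div_cancel₀ hc] using congrArg (c / ·) hxy
  have hjac : ∀ a : ℝ, 0 < a →
      |-c / a ^ 2| * (|c| ^ (-ρ) * |c / a| ^ (ρ - 1)) = a ^ (-ρ - 1) := fun a ha => by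
    have hc' : 0 < |c| := abs_pos.2 hc
    rw [abs_div, abs_div, abs_neg, abs_of_pos ha, abs_of_pos (pow_pos ha 2),
      Real.div_rpow hc'.le ha.le, Real.rpow_sub_one hc'.ne', Real.rpow_sub_one ha.ne' ρ,
      Real.rpow_sub_one ha.ne' (-ρ), Real.rpow_neg hc'.le, Real.rpow_neg ha.le]
    field_simp
  have hsubst := lintegral_image_eq_lintegral_abs_deriv_mul measurableSet_Ioi hderiv hinj
    (fun t => ENNReal.ofReal (|c| ^ (-ρ) * |t| ^ (ρ - 1)) * H t)
  calc ∫⁻ a in Set.Ioi 0, ENNReal.ofReal (a ^ (-ρ - 1)) * H (c / a)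
      = ∫⁻ t in (fun a => c / a) '' Set.Ioi 0, ENNReal.ofReal (|c| ^ (-ρ) * |t| ^ (ρ - 1)) * H t := by
        rw [hsubst]
        refine setLIntegral_congr_fun measurableSet_Ioi fun a ha => ?_
        rw [← mul_assoc, ← ENNReal.ofReal_mul (abs_nonneg _), hjac a ha]
    _ ≤ ∫⁻ t, ENNReal.ofReal (|c| ^ (-ρ) * |t| ^ (ρ - 1)) * H t := setLIntegral_le_lintegral _ _
    _ = _ := by
        simp_rw [ENNReal.ofReal_mul (by positivity : (0 : ℝ) ≤ |c| ^ (-ρ)), mul_assoc]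
        exact lintegral_const_mul' _ _ ofReal_ne_top

theorem lintegral_rpow_mul_lintegral_mul_comp_add_le {p : ℝ} (hp : 0 ≤ p) {Ψ Χ : ℝ → ℝ≥0∞}
    (hΨ : Measurable Ψ) (hΧ : Measurable Χ) :
    ∫⁻ t, ENNReal.ofReal (|t| ^ p) * ∫⁻ s, Ψ s * Χ (s + t) ≤
      2 ^ p * ((∫⁻ s, ENNReal.ofReal (|s| ^ p) * Ψ s) * (∫⁻ t, Χ t) +
        (∫⁻ t, ENNReal.ofReal (|t| ^ p) * Χ t) * ∫⁻ s, Ψ s) := by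
  calc ∫⁻ t, ENNReal.ofReal (|t| ^ p) * ∫⁻ s, Ψ s * Χ (s + t)
      = ∫⁻ t, ∫⁻ s, Ψ s * (ENNReal.ofReal (|t| ^ p) * Χ (s + t)) := by
        refine lintegral_congr fun t => ?_
        rw [← lintegral_const_mul' _ _ ofReal_ne_top]
        simp_rw [mul_left_comm]
    _ = ∫⁻ s, ∫⁻ t, Ψ s * (ENNReal.ofReal (|t| ^ p) * Χ (s + t)) :=
        lintegral_lintegral_swap (by fun_prop)
    _ = ∫⁻ s, ∫⁻ t, Ψ s * (ENNReal.ofReal (|t - s| ^ p) * Χ t) := by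
        refine lintegral_congr fun s => ?_
        simpa using lintegral_add_left_eq_self
          (fun t => Ψ s * (ENNReal.ofReal (|t - s| ^ p) * Χ t)) s
    _ ≤ ∫⁻ s, ∫⁻ t, 2 ^ p * (ENNReal.ofReal (|s| ^ p) * Ψ s * Χ t +
          Ψ s * (ENNReal.ofReal (|t| ^ p) * Χ t)) := by
        refine lintegral_mono fun s => lintegral_mono fun t => ?_
        calc Ψ s * (ENNReal.ofReal (|t - s| ^ p) * Χ t)
            ≤ Ψ s * (2 ^ p * (ENNReal.ofReal (|t| ^ p) + ENNReal.ofReal (|s| ^ p)) * Χ t) := by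
              gcongr; exact ofReal_abs_sub_rpow_le hp t s
          _ = _ := by ring
    _ = ∫⁻ s, 2 ^ p * (ENNReal.ofReal (|s| ^ p) * Ψ s * (∫⁻ t, Χ t) +
          Ψ s * ∫⁻ t, ENNReal.ofReal (|t| ^ p) * Χ t) := by
        refine lintegral_congr fun s => ?_
        rw [lintegral_const_mul _ (by fun_prop), lintegral_add_left (by fun_prop),
          lintegral_const_mul _ hΧ, lintegral_const_mul _ (by fun_prop)]
    _ = _ := by
        rw [lintegral_const_mul _ (by fun_prop), lintegral_add_left (by fun_prop),
          lintegral_mul_const _ (by fun_prop), lintegral_mul_const _ hΨ, mul_comm (∫⁻ s, Ψ s)]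

theorem enorm_fracWav (θ ρ : ℝ) (g : ℝ → ℂ) (a b t : ℝ) :
    ‖fracWav θ ρ g a b t‖ₑ = ENNReal.ofReal (|a| ^ (-ρ)) * ‖g ((t - b) / a)‖ₑ := by
  have hphase : (-(I / 2)) * ((t : ℂ) ^ 2 - (b : ℂ) ^ 2) * ((Real.cos θ / Real.sin θ : ℝ) : ℂ) =
      ((-(t ^ 2 - b ^ 2) * (Real.cos θ / Real.sin θ) / 2 : ℝ) : ℂ) * I := by
    push_cast; ring
  rw [fracWav, hphase, enorm_mul, enorm_mul, Complex.enorm_exp_ofReal_mul_I, one_mul,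
    Complex.enorm_ofReal, Real.enorm_of_nonneg (by positivity)]

theorem enorm_basicD_le (θ ρ : ℝ) (ψ χ φ : ℝ → ℂ) (u v w : ℝ) :
    ‖basicD θ ρ ψ χ φ u v w‖ₑ ≤ ‖(admConst φ)⁻¹‖ₑ *
      ∫⁻ a in Set.Ioi 0, ∫⁻ b, ENNReal.ofReal (a ^ (-ρ - 3)) *
        ‖ψ ((w - b) / a)‖ₑ * ‖χ ((v - b) / a)‖ₑ * ‖φ ((u - b) / a)‖ₑ := by
  have hC : ‖((admConst φ : ℂ))⁻¹‖ₑ = ‖(admConst φ)⁻¹‖ₑ := by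
    rw [← Complex.ofReal_inv, Complex.enorm_ofReal]
  rw [basicD, enorm_mul, hC]
  gcongr
  refine (enorm_integral_le_lintegral_enorm _).trans
    (setLIntegral_mono' measurableSet_Ioi fun a (ha : 0 < a) => ?_)
  refine (enorm_integral_le_lintegral_enorm _).trans (le_of_eq (lintegral_congr fun b => ?_))
  have hpow : ENNReal.ofReal (a ^ (-ρ)) * ENNReal.ofReal (a ^ (-ρ)) * ENNReal.ofReal (a ^ (-ρ)) *
      ENNReal.ofReal (a ^ (2 * ρ - 3)) = ENNReal.ofReal (a ^ (-ρ - 3)) := by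
    rw [← ENNReal.ofReal_mul (by positivity), ← ENNReal.ofReal_mul (by positivity),
      ← ENNReal.ofReal_mul (by positivity), ← Real.rpow_add ha, ← Real.rpow_add ha,
      ← Real.rpow_add ha]
    ring_nf
  rw [enorm_mul, enorm_mul, enorm_mul, RCLike.enorm_conj, RCLike.enorm_conj, enorm_fracWav,
    enorm_fracWav, enorm_fracWav, Complex.enorm_ofReal,
    Real.enorm_of_nonneg (by positivity), abs_of_pos ha, ← hpow]
  ring

theorem lintegral_wavelet_kernel_eq {ρ : ℝ} {Ψ Χ Φ : ℝ → ℝ≥0∞}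
    (hΨ : Measurable Ψ) (hΧ : Measurable Χ) (hΦ : Measurable Φ) (v w : ℝ) :
    ∫⁻ u, ∫⁻ a in Set.Ioi 0, ∫⁻ b, ENNReal.ofReal (a ^ (-ρ - 3)) *
        Ψ ((w - b) / a) * Χ ((v - b) / a) * Φ ((u - b) / a) =
      (∫⁻ a in Set.Ioi 0, ENNReal.ofReal (a ^ (-ρ - 1)) * ∫⁻ s, Ψ s * Χ (s + (v - w) / a)) *
        ∫⁻ x, Φ x := by
  have hK : Measurable fun q : (ℝ × ℝ) × ℝ => ENNReal.ofReal (q.1.2 ^ (-ρ - 3)) *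
      Ψ ((w - q.2) / q.1.2) * Χ ((v - q.2) / q.1.2) * Φ ((q.1.1 - q.2) / q.1.2) := by
    fun_prop
  rw [lintegral_lintegral_swap hK.lintegral_prod_right'.aemeasurable,
    ← lintegral_mul_const _ (by fun_prop)]
  refine setLIntegral_congr_fun measurableSet_Ioi fun a (ha : 0 < a) => ?_
  have hb : ∫⁻ b, Ψ ((w - b) / a) * Χ ((v - b) / a) =
      ENNReal.ofReal a * ∫⁻ s, Ψ s * Χ (s + (v - w) / a) := by
    have hdil := lintegral_comp_div (fun s => Ψ s * Χ (s + (v - w) / a)) ha.ne'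
    rw [abs_of_pos ha] at hdil
    rw [← lintegral_sub_left_eq_self _ w, ← hdil]
    refine lintegral_congr fun b => ?_
    congr 2 <;> ring
  have hpow : ENNReal.ofReal (a ^ (-ρ - 3)) * ENNReal.ofReal a * ENNReal.ofReal a =
      ENNReal.ofReal (a ^ (-ρ - 1)) := by
    rw [← ENNReal.ofReal_mul (by positivity), ← ENNReal.ofReal_mul (by positivity),
      ← Real.rpow_add_one ha.ne', ← Real.rpow_add_one ha.ne']
    ring_nf
  calc ∫⁻ u, ∫⁻ b, ENNReal.ofReal (a ^ (-ρ - 3)) *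
        Ψ ((w - b) / a) * Χ ((v - b) / a) * Φ ((u - b) / a)
      = ∫⁻ b, ∫⁻ u, ENNReal.ofReal (a ^ (-ρ - 3)) *
        Ψ ((w - b) / a) * Χ ((v - b) / a) * Φ ((u - b) / a) :=
        lintegral_lintegral_swap (by fun_prop)
    _ = ∫⁻ b, ENNReal.ofReal (a ^ (-ρ - 3)) * (Ψ ((w - b) / a) * Χ ((v - b) / a)) *
        (ENNReal.ofReal a * ∫⁻ x, Φ x) := by
        refine lintegral_congr fun b => ?_
        rw [lintegral_const_mul _ (by fun_prop), lintegral_comp_sub_div Φ b ha.ne', abs_of_pos ha,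
          mul_assoc (ENNReal.ofReal _)]
    _ = ENNReal.ofReal (a ^ (-ρ - 3)) * (ENNReal.ofReal a * ∫⁻ s, Ψ s * Χ (s + (v - w) / a)) *
        (ENNReal.ofReal a * ∫⁻ x, Φ x) := by
        rw [lintegral_mul_const _ (by fun_prop), lintegral_const_mul _ (by fun_prop), hb]
    _ = _ := by
        rw [← hpow]
        ring

theorem lintegral_enorm_basicD_le (θ : ℝ) {ρ : ℝ} (hρ : 1 ≤ ρ) {ψ χ φ : ℝ → ℂ}
    (hψ : AEStronglyMeasurable ψ) (hχ : AEStronglyMeasurable χ) (hφ : AEStronglyMeasurable φ)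
    {v w : ℝ} (hvw : v ≠ w) :
    ∫⁻ u, ‖basicD θ ρ ψ χ φ u v w‖ₑ ≤
      ‖(admConst φ)⁻¹‖ₑ * ENNReal.ofReal (|v - w| ^ (-ρ)) * 2 ^ (ρ - 1) *
        (eLpNorm (fun x => ψ x * ((|x| ^ (ρ - 1) : ℝ) : ℂ)) 1 volume * eLpNorm χ 1 volume +
          eLpNorm (fun x => χ x * ((|x| ^ (ρ - 1) : ℝ) : ℂ)) 1 volume * eLpNorm ψ 1 volume) *
        eLpNorm φ 1 volume := by
  -- Measurable majorants, equal a.e. to the moduli, make Tonelli available without having to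
  -- transport a.e. equalities along `b ↦ (w - b) / a`.
  obtain ⟨Ψ, hΨ, hψΨ, hΨψ⟩ := hψ.enorm.exists_measurable_ge_ae_eq
  obtain ⟨Χ, hΧ, hχΧ, hΧχ⟩ := hχ.enorm.exists_measurable_ge_ae_eq
  obtain ⟨Φ, hΦ, hφΦ, hΦφ⟩ := hφ.enorm.exists_measurable_ge_ae_eq
  have hweighted : ∀ {g : ℝ → ℂ} {G : ℝ → ℝ≥0∞}, G =ᵐ[volume] (fun x => ‖g x‖ₑ) →
      ∫⁻ x, ENNReal.ofReal (|x| ^ (ρ - 1)) * G x =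
        eLpNorm (fun x => g x * ((|x| ^ (ρ - 1) : ℝ) : ℂ)) 1 volume := fun hG => by
    refine lintegral_eq_eLpNorm_one_of_ae_eq (hG.mono fun x hx => ?_)
    dsimp only at hx ⊢
    rw [hx, enorm_mul, Complex.enorm_ofReal, Real.enorm_of_nonneg (by positivity), mul_comm]
  calc ∫⁻ u, ‖basicD θ ρ ψ χ φ u v w‖ₑ
      ≤ ∫⁻ u, ‖(admConst φ)⁻¹‖ₑ * ∫⁻ a in Set.Ioi 0, ∫⁻ b, ENNReal.ofReal (a ^ (-ρ - 3)) *
          Ψ ((w - b) / a) * Χ ((v - b) / a) * Φ ((u - b) / a) := by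
        refine lintegral_mono fun u => (enorm_basicD_le θ ρ ψ χ φ u v w).trans ?_
        gcongr
        exacts [hψΨ _, hχΧ _, hφΦ _]
    _ = ‖(admConst φ)⁻¹‖ₑ * ((∫⁻ a in Set.Ioi 0, ENNReal.ofReal (a ^ (-ρ - 1)) *
          ∫⁻ s, Ψ s * Χ (s + (v - w) / a)) * ∫⁻ x, Φ x) := by
        rw [lintegral_const_mul' _ _ enorm_ne_top,
          lintegral_wavelet_kernel_eq hΨ hΧ hΦ]
    _ ≤ ‖(admConst φ)⁻¹‖ₑ * (ENNReal.ofReal (|v - w| ^ (-ρ)) *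
          (∫⁻ t, ENNReal.ofReal (|t| ^ (ρ - 1)) * ∫⁻ s, Ψ s * Χ (s + t)) * ∫⁻ x, Φ x) := by
        gcongr
        exact setLIntegral_Ioi_rpow_mul_comp_div_le _ ρ (sub_ne_zero.2 hvw)
    _ ≤ ‖(admConst φ)⁻¹‖ₑ * (ENNReal.ofReal (|v - w| ^ (-ρ)) *
          (2 ^ (ρ - 1) * ((∫⁻ s, ENNReal.ofReal (|s| ^ (ρ - 1)) * Ψ s) * (∫⁻ t, Χ t) +
            (∫⁻ t, ENNReal.ofReal (|t| ^ (ρ - 1)) * Χ t) * ∫⁻ s, Ψ s)) * ∫⁻ x, Φ x) := by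
        gcongr
        exact lintegral_rpow_mul_lintegral_mul_comp_add_le (by linarith) hΨ hΧ
    _ = _ := by
        rw [hweighted hΨψ, hweighted hΧχ, lintegral_eq_eLpNorm_one_of_ae_eq hΨψ,
          lintegral_eq_eLpNorm_one_of_ae_eq hΧχ, lintegral_eq_eLpNorm_one_of_ae_eq hΦφ]
        ring

theorem basicD_L1_first'_general (θ ρ : ℝ) (hρ : 1 ≤ ρ)
    (ψ φ χ : ℝ → ℂ) (hφ : MemLp φ 1 volume)
    (hχ : MemLp (fun x : ℝ => ((1 + |x| ^ (ρ - 1) : ℝ) : ℂ) * χ x) 1 volume)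
    (hψ : MemLp (fun x : ℝ => ((1 + |x| ^ (ρ - 1) : ℝ) : ℂ) * ψ x) 1 volume)
    (hCpos : 0 < admConst φ)
    (v w : ℝ) (hvw : v ≠ w) :
    (∫ u : ℝ, ‖basicD θ ρ ψ χ φ u v w‖) ≤
      (admConst φ)⁻¹ * 2 ^ (ρ - 1) * |v - w| ^ (-ρ) *
        ((eLpNorm (fun x : ℝ => ψ x * ((|x| ^ (ρ - 1) : ℝ) : ℂ)) 1 volume).toReal *
            (eLpNorm χ 1 volume).toReal +
          (eLpNorm (fun x : ℝ => χ x * ((|x| ^ (ρ - 1) : ℝ) : ℂ)) 1 volume).toReal *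
            (eLpNorm ψ 1 volume).toReal) *
        (eLpNorm φ 1 volume).toReal := by
  obtain ⟨hψ₁, hψw⟩ := MemLp.of_one_add_rpow_abs_mul hψ
  obtain ⟨hχ₁, hχw⟩ := MemLp.of_one_add_rpow_abs_mul hχ
  have hbound := lintegral_enorm_basicD_le θ hρ hψ₁.1 hχ₁.1 hφ.1 hvw
  rw [Real.enorm_of_nonneg (inv_nonneg.2 hCpos.le)] at hbound
  have := hψw.eLpNorm_ne_top; have := hχw.eLpNorm_ne_top; have := hψ₁.eLpNorm_ne_top
  have := hχ₁.eLpNorm_ne_top; have := hφ.eLpNorm_ne_top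
  refine (integral_norm_le_toReal_lintegral_enorm _).trans
    ((ENNReal.toReal_mono (by finiteness) hbound).trans_eq ?_)
  simp only [ENNReal.toReal_mul]
  rw [ENNReal.toReal_add (by finiteness) (by finiteness)]
  simp only [ENNReal.toReal_mul, ENNReal.toReal_ofReal (inv_nonneg.2 hCpos.le),
    ENNReal.toReal_ofReal (by positivity : (0 : ℝ) ≤ |v - w| ^ (-ρ)),
    ← ENNReal.toReal_rpow, ENNReal.toReal_ofNat]
  ring

/-- Theorem 3.3(ii): L¹ bound of the basic function in the first variable, case `ρ ≥ 1`. -/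
theorem basicD_L1_first' (θ ρ : ℝ) (hθ : Real.sin θ ≠ 0) (hρ : 1 ≤ ρ)
    (ψ φ χ : ℝ → ℂ) (hφ : MemLp φ 1 volume)
    (hχ : MemLp (fun x : ℝ => ((1 + |x| ^ (ρ - 1) : ℝ) : ℂ) * χ x) 1 volume)
    (hψ : MemLp (fun x : ℝ => ((1 + |x| ^ (ρ - 1) : ℝ) : ℂ) * ψ x) 1 volume)
    (hCpos : 0 < admConst φ)
    (hCfin : Integrable (fun ω : ℝ => ‖FourierTransform.fourier φ ω‖ ^ 2 / |ω|))
    (v w : ℝ) (hvw : v ≠ w) :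
    (∫ u : ℝ, ‖basicD θ ρ ψ χ φ u v w‖) ≤
      (admConst φ)⁻¹ * 2 ^ (ρ - 1) * |v - w| ^ (-ρ) *
        ((eLpNorm (fun x : ℝ => ψ x * ((|x| ^ (ρ - 1) : ℝ) : ℂ)) 1 volume).toReal *
            (eLpNorm χ 1 volume).toReal +
          (eLpNorm (fun x : ℝ => χ x * ((|x| ^ (ρ - 1) : ℝ) : ℂ)) 1 volume).toReal *
            (eLpNorm ψ 1 volume).toReal) *
        (eLpNorm φ 1 volume).toReal :=
  basicD_L1_first'_general θ ρ hρ ψ φ χ hφ hχ hψ hCpos v w hvw
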